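/- Let W ∈ 𝒲* and suppose log W(N)/log N → 0 as N → ∞. Then: (1) W(N−1)/W(N) → 1; (2) N·Δ²W(N+1)/ΔW(N) → −1; and (3) N·ΔW(N)/W(N) → 0, as N → ∞. -/

import Mathlib

/-!
Write `r(N) = N Δ²W(N) / ΔW(N)`. Summation by parts gives
`∑_{M < j ≤ N} j (ΔW(j) - ΔW(j-1)) = (N+1) ΔW(N) - (M+1) ΔW(M) - (W(N) - W(M))`,
so a bound `r ≤ c` (resp. `r ≥ c`) on `(M, N]` turns into
`(N+1) ΔW(N) ≤ (1+c) (W(N) - W(M)) + const` (resp. `≥`).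
If `c < -1` eventually, this bounds `W`, contradicting `W → ∞`. If `c > -1` eventually, then
`N ΔW(N) ≥ κ W(N)` for some `κ > 0`, so `log W(N) - κ log N` is bounded below, contradicting
`log W(N) / log N → 0`. Hence `r → -1`, and the estimate with `c = -1 + ε` gives
`N ΔW(N) / W(N) ≤ ε + o(1)`, which is (3); (1) and (2) are rearrangements of (3) and of `r → -1`.
-/

open Filter Finset

/-- Discrete derivative: `ΔW(N) = W(N) - W(N-1)` for `N ≥ 2`, and `ΔW(1) = W(1)`. -/
noncomputable def dd (W : ℕ → ℝ) (N : ℕ) : ℝ := if 2 ≤ N then W N - W (N - 1) else W 1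

/-- Weighted average `E^W_{n ≤ N} f(n) = (1/W(N)) ∑_{n=1}^N ΔW(n) f(n)`. -/
noncomputable def wAvg (W : ℕ → ℝ) (f : ℕ → ℂ) (N : ℕ) : ℂ :=
  (1 / (W N : ℂ)) * ∑ n ∈ Finset.Icc 1 N, (dd W n : ℂ) * f n

/-- Cesàro average `E_{n ≤ N} f(n) = (1/N) ∑_{n=1}^N f(n)`. -/
noncomputable def cesaro (f : ℕ → ℂ) (N : ℕ) : ℂ :=
  (1 / (N : ℂ)) * ∑ n ∈ Finset.Icc 1 N, f n

/-- Parity-neutral binomial mean. -/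
noncomputable def e2bin (f : ℕ → ℂ) (N : ℕ) : ℂ :=
  (1 / 2 ^ (N + 1) : ℂ) * ∑ n ∈ Finset.Icc 1 (2 * N), (Nat.choose N (n / 2) : ℂ) * f n

/-- Binomial mean. -/
noncomputable def ebin (f : ℕ → ℂ) (N : ℕ) : ℂ :=
  (1 / 2 ^ N : ℂ) * ∑ n ∈ Finset.Icc 1 N, (Nat.choose N n : ℂ) * f n

/-- The class 𝒲: eventually non-decreasing nonnegative functions tending to ∞. -/
def memW (W : ℕ → ℝ) : Prop :=
  (∀ n, 0 ≤ W n) ∧ (∃ N₀ : ℕ, ∀ m n : ℕ, N₀ ≤ m → m ≤ n → W m ≤ W n) ∧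
    Tendsto W atTop atTop

/-- The class 𝒲*: members of 𝒲 for which `N·Δ²W(N)/ΔW(N)` converges in `ℝ ∪ {±∞}`. -/
def memWstar (W : ℕ → ℝ) : Prop :=
  memW W ∧ ∃ l : EReal,
    Tendsto (fun N : ℕ => (((N : ℝ) * dd (dd W) N / dd W N : ℝ) : EReal)) atTop (nhds l)

/-- The class ℒ: members of 𝒲 (with values in ℕ) whose discrete derivative is
eventually in {0,1}. -/
def memL (L : ℕ → ℕ) : Prop :=
  memW (fun n => (L n : ℝ)) ∧
    ∃ N₀ : ℕ, ∀ n : ℕ, N₀ ≤ n → L n = L (n - 1) ∨ L n = L (n - 1) + 1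

/-- Gaussian probability density with mean μ and standard deviation σ. -/
noncomputable def gauss (x μ σ : ℝ) : ℝ :=
  (1 / (σ * Real.sqrt (2 * Real.pi))) * Real.exp (-(x - μ) ^ 2 / (2 * σ ^ 2))

/-- The Gaussian condition \eqref{gaussian_condition}. -/
def gaussCond (ϑ : ℕ → ℕ) (L : ℕ → ℕ) : Prop :=
  Tendsto (fun N : ℕ => ∑' k : ℕ,
      |(((Finset.Icc 1 N).filter (fun n => ϑ n = k + 1)).card : ℝ) / N -
        gauss (k + 1 : ℝ) (L N) (Real.sqrt (L N))|) atTop (nhds 0)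

/-- Ω(n): number of prime factors with multiplicity. -/
def bigOmega (n : ℕ) : ℕ := n.primeFactorsList.length

/-- ω(n): number of distinct prime factors. -/
def smallOmega (n : ℕ) : ℕ := n.primeFactors.card

/-- Uniform distribution mod 1. -/
def udMod1 (x : ℕ → ℝ) : Prop :=
  ∀ a b : ℝ, 0 ≤ a → a < b → b ≤ 1 →
    Tendsto (fun N : ℕ =>
        (((Finset.Icc 1 N).filter
            (fun n => a ≤ Int.fract (x n) ∧ Int.fract (x n) < b)).card : ℝ) / N)
      atTop (nhds (b - a))

open Real Topology

lemma tendsto_of_tendsto_coe_ereal {ι : Type*} {f : Filter ι} {r : ι → ℝ} {l : EReal} {x : ℝ}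
    (hl : Tendsto (fun i ↦ (r i : EReal)) f (𝓝 l))
    (hlt : ∀ c < x, ¬ ∀ᶠ i in f, r i ≤ c) (hgt : ∀ c > x, ¬ ∀ᶠ i in f, c ≤ r i) :
    Tendsto r f (𝓝 x) := by
  rcases lt_trichotomy l x with h | rfl | h
  · obtain ⟨c, hlc, hcx⟩ := EReal.lt_iff_exists_real_btwn.1 h
    exact absurd ((hl.eventually (gt_mem_nhds hlc)).mono fun i hi ↦ (EReal.coe_lt_coe_iff.1 hi).le)
      (hlt c (EReal.coe_lt_coe_iff.1 hcx))
  · exact EReal.tendsto_coe.1 hl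
  · obtain ⟨c, hxc, hcl⟩ := EReal.lt_iff_exists_real_btwn.1 h
    exact absurd ((hl.eventually (lt_mem_nhds hcl)).mono fun i hi ↦ (EReal.coe_lt_coe_iff.1 hi).le)
      (hgt c (EReal.coe_lt_coe_iff.1 hxc))

noncomputable def elasticity (W : ℕ → ℝ) (N : ℕ) : ℝ := N * dd (dd W) N / dd W N

section

variable {W : ℕ → ℝ} {M N : ℕ} {c κ : ℝ}

lemma dd_of_two_le (hN : 2 ≤ N) : dd W N = W N - W (N - 1) :=
  if_pos hN

lemma dd_succ {n : ℕ} (hn : 1 ≤ n) : dd W (n + 1) = W (n + 1) - W n :=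
  dd_of_two_le (by omega)

lemma sum_Ioc_dd (hM : 1 ≤ M) (hMN : M ≤ N) :
    ∑ j ∈ Ioc M N, dd W j = W N - W M := by
  induction N, hMN using Nat.le_induction with
  | base => simp
  | succ n hn ih => rw [sum_Ioc_succ_top hn, ih, dd_succ (hM.trans hn)]; ring

lemma sum_Ioc_natCast_mul_sub (a : ℕ → ℝ) (hMN : M ≤ N) :
    ∑ j ∈ Ioc M N, (j : ℝ) * (a j - a (j - 1)) =
      (N + 1) * a N - (M + 1) * a M - ∑ j ∈ Ioc M N, a j := by
  induction N, hMN using Nat.le_induction with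
  | base => simp
  | succ n hn ih => rw [sum_Ioc_succ_top hn, sum_Ioc_succ_top hn, ih]; push_cast; ring

lemma elasticity_le_iff {j : ℕ} (hj : 2 ≤ j) (hpos : 0 < dd W j) :
    elasticity W j ≤ c ↔ j * (dd W j - dd W (j - 1)) ≤ c * dd W j := by
  rw [elasticity, dd_of_two_le hj, div_le_iff₀ hpos]

lemma le_elasticity_iff {j : ℕ} (hj : 2 ≤ j) (hpos : 0 < dd W j) :
    c ≤ elasticity W j ↔ c * dd W j ≤ j * (dd W j - dd W (j - 1)) := by
  rw [elasticity, dd_of_two_le hj, le_div_iff₀ hpos]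

lemma succ_mul_dd_sub_le (hM : 1 ≤ M) (hMN : M ≤ N)
    (h : ∀ j > M, 0 < dd W j ∧ elasticity W j ≤ c) :
    (N + 1) * dd W N - (M + 1) * dd W M ≤ (1 + c) * (W N - W M) := by
  have hsum : ∑ j ∈ Ioc M N, (j : ℝ) * (dd W j - dd W (j - 1)) ≤ ∑ j ∈ Ioc M N, c * dd W j :=
    sum_le_sum fun j hj ↦ by
      have hj := (mem_Ioc.1 hj).1
      exact (elasticity_le_iff (by omega) (h j hj).1).1 (h j hj).2
  rw [sum_Ioc_natCast_mul_sub _ hMN, ← mul_sum, sum_Ioc_dd hM hMN] at hsum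
  linarith

lemma le_succ_mul_dd_sub (hM : 1 ≤ M) (hMN : M ≤ N)
    (h : ∀ j > M, 0 < dd W j ∧ c ≤ elasticity W j) :
    (1 + c) * (W N - W M) ≤ (N + 1) * dd W N - (M + 1) * dd W M := by
  have hsum : ∑ j ∈ Ioc M N, c * dd W j ≤ ∑ j ∈ Ioc M N, (j : ℝ) * (dd W j - dd W (j - 1)) :=
    sum_le_sum fun j hj ↦ by
      have hj := (mem_Ioc.1 hj).1
      exact (le_elasticity_iff (by omega) (h j hj).1).1 (h j hj).2
  rw [sum_Ioc_natCast_mul_sub _ hMN, ← mul_sum, sum_Ioc_dd hM hMN] at hsum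
  linarith

lemma exists_add_mul_log_le_log (hκ : 0 ≤ κ)
    (h : ∀ᶠ N in atTop, 0 < W N ∧ κ * W N ≤ N * dd W N) :
    ∃ C, ∀ᶠ N : ℕ in atTop, C + κ * log N ≤ log (W N) := by
  obtain ⟨M, hM⟩ := eventually_atTop.1 (h.and (eventually_ge_atTop 1))
  set g : ℕ → ℝ := fun n ↦ log (W n) - κ * log (n + 1)
  have hstep : ∀ n ≥ M, g n ≤ g (n + 1) := by
    intro n hn
    obtain ⟨⟨hWn, -⟩, hn1⟩ := hM n hn
    obtain ⟨⟨hW, hgrowth⟩, -⟩ := hM (n + 1) (by omega)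
    rw [dd_succ hn1] at hgrowth
    push_cast at hgrowth
    have hW_ratio : log (W n / W (n + 1)) ≤ -(κ / (n + 1)) := by
      calc log (W n / W (n + 1)) ≤ W n / W (n + 1) - 1 := log_le_sub_one_of_pos (by positivity)
        _ = -((W (n + 1) - W n) / W (n + 1)) := by field_simp; ring
        _ ≤ -(κ / (n + 1)) := neg_le_neg ((div_le_div_iff₀ (by positivity) hW).2 (by linarith))
    have hlog_ratio : log ((n + 2) / (n + 1)) ≤ 1 / (n + 1) :=
      (log_le_sub_one_of_pos (by positivity)).trans_eq (by field_simp; ring)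
    rw [log_div hWn.ne' hW.ne'] at hW_ratio
    rw [log_div (by positivity) (by positivity)] at hlog_ratio
    simp only [g]
    push_cast
    rw [show (n : ℝ) + 1 + 1 = n + 2 by ring]
    have := mul_le_mul_of_nonneg_left hlog_ratio hκ
    rw [mul_one_div] at this
    linarith
  refine ⟨g M, ?_⟩
  filter_upwards [eventually_ge_atTop M] with N hN
  have hgN : g M ≤ g N := monotoneOn_nat_Ici_of_le_succ hstep (Set.mem_Ici.2 le_rfl) hN hN
  have hN0 : (0 : ℝ) < N := by exact_mod_cast (hM M le_rfl).2.trans hN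
  have : κ * log N ≤ κ * log (N + 1) :=
    mul_le_mul_of_nonneg_left (log_le_log hN0 (by linarith)) hκ
  simp only [g] at hgN
  linarith

lemma not_tendsto_log_div_log_zero (hκ : 0 < κ)
    (h : ∀ᶠ N in atTop, 0 < W N ∧ κ * W N ≤ N * dd W N) :
    ¬ Tendsto (fun N : ℕ ↦ log (W N) / log N) atTop (𝓝 0) := by
  intro hlog
  obtain ⟨C, hC⟩ := exists_add_mul_log_le_log hκ.le h
  have hlim : Tendsto (fun N : ℕ ↦ κ + C / log N) atTop (𝓝 (κ + 0)) :=
    tendsto_const_nhds.add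
      (tendsto_const_nhds.div_atTop (tendsto_log_atTop.comp tendsto_natCast_atTop_atTop))
  have hle : ∀ᶠ N : ℕ in atTop, κ + C / log N ≤ log (W N) / log N := by
    filter_upwards [hC, eventually_ge_atTop 2] with N hN h2
    have hlogN : 0 < log N := log_pos (by exact_mod_cast h2)
    rw [add_div' _ _ _ hlogN.ne', div_le_div_iff_of_pos_right hlogN]
    linarith
  linarith [le_of_tendsto_of_tendsto hlim hlog hle]

lemma exists_dd_eq_zero_and_dd_succ_ne (htop : Tendsto W atTop atTop) {m : ℕ}
    (hm : 1 ≤ m) (hzero : dd W m = 0) : ∃ n ≥ m, dd W n = 0 ∧ dd W (n + 1) ≠ 0 := by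
  by_contra! h
  have hconst : ∀ n ≥ m, dd W n = 0 ∧ W n = W m := by
    intro n hn
    induction n, hn using Nat.le_induction with
    | base => exact ⟨hzero, rfl⟩
    | succ n hn ih =>
      have hsucc := h n hn ih.1
      rw [dd_succ (hm.trans hn)] at hsucc ⊢
      exact ⟨by linarith, by linarith [ih.2]⟩
  obtain ⟨n, hn, hWn⟩ := ((eventually_ge_atTop m).and (htop.eventually_gt_atTop (W m))).exists
  exact hWn.ne' (hconst n hn).2

/-- Where `ΔW` vanishes the quotient defining the elasticity is `0` by convention, while just
after the last zero of a run of zeros it equals `N`; so a limit in `EReal` forces `ΔW > 0`. -/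
lemma eventually_dd_pos
    (hmono : ∃ N₀ : ℕ, ∀ m n : ℕ, N₀ ≤ m → m ≤ n → W m ≤ W n) (htop : Tendsto W atTop atTop)
    {l : EReal} (hl : Tendsto (fun N ↦ (elasticity W N : EReal)) atTop (𝓝 l)) :
    ∀ᶠ N in atTop, 0 < dd W N := by
  obtain ⟨N₀, hN₀⟩ := hmono
  have hnonneg : ∀ N ≥ N₀ + 2, 0 ≤ dd W N := fun N hN ↦ by
    rw [dd_of_two_le (by omega), sub_nonneg]; exact hN₀ _ _ (by omega) (by omega)
  by_contra hfreq
  have hzero : ∃ᶠ N in atTop, N ≥ N₀ + 2 ∧ dd W N = 0 := by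
    refine (not_eventually.1 hfreq).and_eventually (eventually_ge_atTop (N₀ + 2)) |>.mono ?_
    exact fun N ⟨hN, hN'⟩ ↦ ⟨hN', le_antisymm (not_lt.1 hN) (hnonneg N hN')⟩
  have hl0 : l = 0 := by
    refine tendsto_nhds_unique_of_frequently_eq hl tendsto_const_nhds (hzero.mono ?_)
    rintro N ⟨-, hN⟩
    simp [elasticity, hN]
  have hjump : ∃ᶠ N in atTop, elasticity W N = N ∧ 1 ≤ N := by
    refine frequently_atTop.2 fun K ↦ ?_
    obtain ⟨m, hKm, hm, hdd⟩ := frequently_atTop.1 hzero K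
    obtain ⟨n, hmn, hn, hn'⟩ := exists_dd_eq_zero_and_dd_succ_ne htop (by omega) hdd
    refine ⟨n + 1, by omega, ?_, by omega⟩
    rw [elasticity, dd_of_two_le (by omega), Nat.add_sub_cancel, hn, sub_zero,
      mul_div_assoc, div_self hn', mul_one]
  have hsmall : ∀ᶠ N in atTop, (elasticity W N : EReal) < 1 :=
    hl.eventually (gt_mem_nhds (hl0 ▸ zero_lt_one))
  obtain ⟨N, ⟨hN, hN1⟩, hsmallN⟩ := (hjump.and_eventually hsmall).exists
  rw [hN, ← EReal.coe_one, EReal.coe_lt_coe_iff] at hsmallN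
  exact hsmallN.not_ge (by exact_mod_cast hN1)

lemma not_eventually_elasticity_le (htop : Tendsto W atTop atTop)
    (hpos : ∀ᶠ N in atTop, 0 < dd W N) (hc : c < -1) :
    ¬ ∀ᶠ N in atTop, elasticity W N ≤ c := by
  intro h
  obtain ⟨M, hM⟩ := eventually_atTop.1 ((hpos.and h).and (eventually_ge_atTop 1))
  have hbdd : ∀ N ≥ M, W N ≤ W M + (M + 1) * dd W M / -(1 + c) := by
    intro N hN
    have hsum := succ_mul_dd_sub_le (hM M le_rfl).2 hN fun j hj ↦ (hM j hj.le).1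
    have hNpos : 0 ≤ (N + 1) * dd W N := by have := (hM N hN).1.1; positivity
    rw [← sub_le_iff_le_add', le_div_iff₀ (by linarith)]
    linarith
  obtain ⟨N, hN, hWN⟩ := ((eventually_ge_atTop M).and
    (htop.eventually_gt_atTop (W M + (M + 1) * dd W M / -(1 + c)))).exists
  exact (hbdd N hN).not_gt hWN

lemma not_eventually_le_elasticity (hlog : Tendsto (fun N : ℕ ↦ log (W N) / log N) atTop (𝓝 0))
    (htop : Tendsto W atTop atTop) (hpos : ∀ᶠ N in atTop, 0 < dd W N) (hc : -1 < c) :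
    ¬ ∀ᶠ N in atTop, c ≤ elasticity W N := by
  intro h
  obtain ⟨M, hM⟩ := eventually_atTop.1 ((hpos.and h).and (eventually_ge_atTop 1))
  refine not_tendsto_log_div_log_zero (κ := (1 + c) / 4) (by linarith) ?_ hlog
  filter_upwards [eventually_ge_atTop M, htop.eventually_gt_atTop 0,
    htop.eventually_ge_atTop (2 * W M)] with N hN hWN hWM
  have hsum := le_succ_mul_dd_sub (hM M le_rfl).2 hN fun j hj ↦ (hM j hj.le).1
  have hdd := (hM N hN).1.1
  have hN1 : (1 : ℝ) ≤ N := by exact_mod_cast (hM N hN).2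
  have : 0 < (M + 1) * dd W M := by have := (hM M le_rfl).1.1; positivity
  refine ⟨hWN, ?_⟩
  calc (1 + c) / 4 * W N ≤ (1 + c) * (W N - W M) / 2 := by nlinarith
    _ ≤ (N + 1) * dd W N / 2 := by linarith
    _ ≤ N * dd W N := by nlinarith

lemma exists_natCast_mul_dd_le (hpos : ∀ᶠ N in atTop, 0 < dd W N)
    (hr : Tendsto (elasticity W) atTop (𝓝 (-1))) {ε : ℝ} (hε : 0 < ε) :
    ∃ K, ∀ᶠ N : ℕ in atTop, N * dd W N ≤ K + ε * W N := by
  have hle : ∀ᶠ N in atTop, elasticity W N ≤ -1 + ε := hr.eventually_le_const (by linarith)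
  obtain ⟨M, hM⟩ := eventually_atTop.1 ((hpos.and hle).and (eventually_ge_atTop 1))
  refine ⟨(M + 1) * dd W M - ε * W M, ?_⟩
  filter_upwards [eventually_ge_atTop M] with N hN
  have hsum := succ_mul_dd_sub_le (hM M le_rfl).2 hN fun j hj ↦ (hM j hj.le).1
  have hdd := (hM N hN).1.1
  rw [add_neg_cancel_left] at hsum
  nlinarith

lemma tendsto_natCast_mul_dd_div (htop : Tendsto W atTop atTop)
    (hpos : ∀ᶠ N in atTop, 0 < dd W N) (hr : Tendsto (elasticity W) atTop (𝓝 (-1))) :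
    Tendsto (fun N : ℕ ↦ N * dd W N / W N) atTop (𝓝 0) := by
  have hWpos : ∀ᶠ N in atTop, 0 < W N := htop.eventually_gt_atTop 0
  refine tendsto_order.2 ⟨fun b hb ↦ ?_, fun b hb ↦ ?_⟩
  · filter_upwards [hpos, hWpos] with N hdd hW
    exact hb.trans_le (by positivity)
  · obtain ⟨K, hK⟩ := exists_natCast_mul_dd_le hpos hr (half_pos hb)
    have hKsmall : ∀ᶠ N in atTop, K / W N < b / 2 :=
      (tendsto_const_nhds.div_atTop htop).eventually_lt_const (half_pos hb)
    filter_upwards [hK, hKsmall, hWpos] with N hN hKN hW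
    calc N * dd W N / W N ≤ (K + b / 2 * W N) / W N := by gcongr
      _ = K / W N + b / 2 := by field_simp
      _ < b := by linarith

lemma tendsto_apply_pred_div (htop : Tendsto W atTop atTop)
    (h : Tendsto (fun N : ℕ ↦ N * dd W N / W N) atTop (𝓝 0)) :
    Tendsto (fun N ↦ W (N - 1) / W N) atTop (𝓝 1) := by
  have hlim : Tendsto (fun N : ℕ ↦ 1 - N * dd W N / W N / N) atTop (𝓝 (1 - 0)) :=
    tendsto_const_nhds.sub (h.div_atTop tendsto_natCast_atTop_atTop)
  rw [sub_zero] at hlim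
  refine hlim.congr' ?_
  filter_upwards [htop.eventually_gt_atTop 0, eventually_ge_atTop 2] with N hW hN
  have hN0 : (N : ℝ) ≠ 0 := by positivity
  rw [dd_of_two_le hN]
  field_simp
  ring

lemma tendsto_natCast_mul_dd_dd_succ_div (hpos : ∀ᶠ N in atTop, 0 < dd W N)
    (hr : Tendsto (elasticity W) atTop (𝓝 (-1))) :
    Tendsto (fun N : ℕ ↦ N * dd (dd W) (N + 1) / dd W N) atTop (𝓝 (-1)) := by
  set s : ℕ → ℝ := fun N ↦ elasticity W (N + 1)
  have hs : Tendsto s atTop (𝓝 (-1)) := hr.comp (tendsto_add_atTop_nat 1)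
  have hlim : Tendsto (fun N : ℕ ↦ s N / (1 + (1 - s N) / N)) atTop (𝓝 (-1 / (1 + 0))) :=
    hs.div (tendsto_const_nhds.add
      ((tendsto_const_nhds.sub hs).div_atTop tendsto_natCast_atTop_atTop)) (by norm_num)
  rw [add_zero, div_one] at hlim
  refine hlim.congr' ?_
  filter_upwards [hpos, tendsto_add_atTop_nat 1 |>.eventually hpos, eventually_ge_atTop 1]
    with N hN hN1 h1
  have hN0 : (N : ℝ) ≠ 0 := by positivity
  have hsN : s N = (N + 1) * (dd W (N + 1) - dd W N) / dd W (N + 1) := by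
    simp only [s, elasticity, dd_succ (W := dd W) h1]; push_cast; ring
  have hden : 1 + (1 - s N) / N = (N + 1) * dd W N / (N * dd W (N + 1)) := by
    rw [hsN]; field_simp; ring
  rw [hden, hsN, dd_succ (W := dd W) h1]
  field_simp

end

/-- claims (1)-(3) in the proof of Boshernitzan's lemma. -/
theorem stmt10 (W : ℕ → ℝ) (hW : memWstar W)
    (hlog : Tendsto (fun N : ℕ => Real.log (W N) / Real.log N) atTop (nhds 0)) :
    Tendsto (fun N : ℕ => W (N - 1) / W N) atTop (nhds 1) ∧
    Tendsto (fun N : ℕ => (N : ℝ) * dd (dd W) (N + 1) / dd W N) atTop (nhds (-1)) ∧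
    Tendsto (fun N : ℕ => (N : ℝ) * dd W N / W N) atTop (nhds 0) := by
  obtain ⟨⟨-, hmono, htop⟩, l, hl⟩ := hW
  have hpos : ∀ᶠ N in atTop, 0 < dd W N := eventually_dd_pos hmono htop hl
  have hr : Tendsto (elasticity W) atTop (𝓝 (-1)) :=
    tendsto_of_tendsto_coe_ereal hl (fun _ hc ↦ not_eventually_elasticity_le htop hpos hc)
      (fun _ hc ↦ not_eventually_le_elasticity hlog htop hpos hc)
  have hratio := tendsto_natCast_mul_dd_div htop hpos hr
  exact ⟨tendsto_apply_pred_div htop hratio, tendsto_natCast_mul_dd_dd_succ_div hpos hr, hratio⟩
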